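/- Fix integers p ≥ 2 and N ≥ 2, let ω = exp(2πi/p), and set r(i) = N + 1 − i. There exists a unitary 𝒰 on (ℂ^p)^{⊗N} such that: 𝒰 U_N 𝒰* = V₁†; 𝒰 V₁† 𝒰* = U_N†; 𝒰 (U_i U_{i+1}†) 𝒰* = V_{r(i)}† for i = 1, …, N−1; and 𝒰 V_i† 𝒰* = U_{r(i)}† U_{r(i)+1} for i = 2, …, N (together with the adjoint relations). Consequently, for every real λ ≠ 0, the quantum vector Potts Hamiltonian with self-dual boundary term, H_VP^N[λ] = −(1/2) Σ_{i=1}^{N} (V_i + V_i†) − (λ/2) Σ_{i=1}^{N−1} (U_i U_{i+1}† + U_i† U_{i+1}) − (λ/2)(U_N + U_N†), satisfies 𝒰 H_VP^N[λ] 𝒰* = λ · H_VP^N[1/λ]; in particular the finite vector Potts (p-clock) chain is exactly self-dual under λ ↔ 1/λ. -/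

import Mathlib

open Matrix

/-- The diagonal Weyl generator `U = diag(1, ω, …, ω^{p−1})`, `ω = exp(2πi/p)`. -/
noncomputable def weylU (p : ℕ) : Matrix (Fin p) (Fin p) ℂ :=
  Matrix.diagonal fun s : Fin p =>
    Complex.exp (2 * (Real.pi : ℂ) * Complex.I * ((s : ℕ) : ℂ) / (p : ℂ))

/-- The cyclic shift `V : |s⟩ ↦ |s − 1 mod p⟩` of the Weyl group algebra. -/
noncomputable def weylV (p : ℕ) : Matrix (Fin p) (Fin p) ℂ :=
  Matrix.of fun r s : Fin p => if (s : ℕ) = ((r : ℕ) + 1) % p then 1 else 0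

/-- The operator acting as the p×p matrix `A` on the (1-based) `k`-th tensor factor of
`(ℂ^p)^{⊗N}` and as the identity on all other factors. -/
noncomputable def pSiteOp (p N : ℕ) (A : Matrix (Fin p) (Fin p) ℂ) (k : ℕ) :
    Matrix (Fin N → Fin p) (Fin N → Fin p) ℂ :=
  if h : 1 ≤ k ∧ k ≤ N then
    Matrix.of fun f g =>
      A (f ⟨k - 1, by omega⟩) (g ⟨k - 1, by omega⟩) *
        ∏ j ∈ Finset.univ.erase (⟨k - 1, by omega⟩ : Fin N),
          (if f j = g j then (1 : ℂ) else 0)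
  else 1

/-- The quantum vector Potts (p-clock) chain with the self-dual boundary term:
`H_VP^N[λ] = −(1/2) Σ_{i=1}^{N} (V_i + V_i†)
            − (λ/2) Σ_{i=1}^{N−1} (U_i U_{i+1}† + U_i† U_{i+1}) − (λ/2)(U_N + U_N†)`. -/
noncomputable def vpSD (p N : ℕ) (lam : ℝ) : Matrix (Fin N → Fin p) (Fin N → Fin p) ℂ :=
  -(((1 : ℂ) / 2) • ∑ i ∈ Finset.Icc 1 N,
      (pSiteOp p N (weylV p) i + (pSiteOp p N (weylV p) i)ᴴ))
    - (((lam : ℂ) / 2) • ∑ i ∈ Finset.Icc 1 (N - 1),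
      (pSiteOp p N (weylU p) i * (pSiteOp p N (weylU p) (i + 1))ᴴ
        + (pSiteOp p N (weylU p) i)ᴴ * pSiteOp p N (weylU p) (i + 1)))
    - (((lam : ℂ) / 2) • (pSiteOp p N (weylU p) N + (pSiteOp p N (weylU p) N)ᴴ))

namespace VPD

noncomputable def om (p : ℕ) : ℂ := Complex.exp (2 * (Real.pi : ℂ) * Complex.I / p)

variable {p : ℕ}

lemma om_ne_zero : om p ≠ 0 := Complex.exp_ne_zero _

lemma om_pow_ne_zero (a : ℕ) : om p ^ a ≠ 0 := pow_ne_zero _ om_ne_zero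

lemma om_pow_p (hp : p ≠ 0) : om p ^ p = 1 := (Complex.isPrimitiveRoot_exp p hp).pow_eq_one

lemma om_pow_mod (hp : p ≠ 0) (a : ℕ) : om p ^ (a % p) = om p ^ a := by
  conv_rhs => rw [← Nat.mod_add_div a p]
  rw [pow_add, pow_mul, om_pow_p hp, one_pow, mul_one]

lemma om_pow_congr (hp : p ≠ 0) {a b : ℕ} (h : a % p = b % p) : om p ^ a = om p ^ b := by
  rw [← om_pow_mod hp a, ← om_pow_mod hp b, h]

lemma star_om_pow (a : ℕ) : star (om p ^ a) = (om p ^ a)⁻¹ := by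
  rw [star_pow, ← inv_pow]
  congr 1
  show (starRingEnd ℂ) (om p) = _
  unfold om
  rw [← Complex.exp_conj, ← Complex.exp_neg]
  congr 1
  rw [map_div₀, _root_.map_mul, _root_.map_mul, Complex.conj_I, Complex.conj_ofReal,
    Complex.conj_natCast]
  have h2 : (starRingEnd ℂ) 2 = 2 := map_ofNat _ 2
  rw [h2]
  ring

lemma sqrtp_ne (hp : p ≠ 0) : ((Real.sqrt p : ℝ) : ℂ) ≠ 0 := by
  simp only [ne_eq, Complex.ofReal_eq_zero]
  positivity

lemma sqrtp_mul_self (hp : p ≠ 0) :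
    ((Real.sqrt p : ℝ) : ℂ) * ((Real.sqrt p : ℝ) : ℂ) = (p : ℂ) := by
  rw [← Complex.ofReal_mul, Real.mul_self_sqrt (by positivity), Complex.ofReal_natCast]

lemma exp_eq_om_pow (s : Fin p) :
    Complex.exp (2 * (Real.pi : ℂ) * Complex.I * ((s : ℕ) : ℂ) / (p : ℂ)) = om p ^ (s : ℕ) := by
  unfold om; rw [← Complex.exp_nat_mul]; congr 1; ring

lemma weylU_apply (r s : Fin p) :
    weylU p r s = if r = s then om p ^ (r : ℕ) else 0 := by
  rw [weylU, Matrix.diagonal_apply]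
  split
  · next h => rw [exp_eq_om_pow, h]
  · rfl

lemma weylVH_apply (r s : Fin p) :
    (weylV p)ᴴ r s = if (r : ℕ) = ((s : ℕ) + 1) % p then 1 else 0 := by
  simp [conjTranspose_apply, weylV, apply_ite]

lemma succ_val [NeZero p] (hp2 : 2 ≤ p) (k : Fin p) :
    ((k + 1 : Fin p) : ℕ) = ((k : ℕ) + 1) % p := by
  rw [Fin.add_def, Fin.val_one', Nat.mod_eq_of_lt (show (1:ℕ) < p by omega)]

lemma cond_iff [NeZero p] (hp2 : 2 ≤ p) (r k : Fin p) :
    ((r : ℕ) = ((k : ℕ) + 1) % p) ↔ r = k + 1 := by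
  rw [Fin.ext_iff, succ_val hp2]

noncomputable def Gm (p : ℕ) : Matrix (Fin p) (Fin p) ℂ :=
  Matrix.of fun r s => (om p ^ ((r : ℕ) * (s : ℕ)))⁻¹ / (Real.sqrt p : ℂ)

lemma Gm_apply (r s : Fin p) :
    Gm p r s = (om p ^ ((r : ℕ) * (s : ℕ)))⁻¹ / (Real.sqrt p : ℂ) := rfl

lemma Gm_mul_weylU [NeZero p] (hp2 : 2 ≤ p) : Gm p * weylU p = (weylV p)ᴴ * Gm p := by
  have hp : p ≠ 0 := by omega
  ext r s
  rw [weylU, Matrix.mul_diagonal, Matrix.mul_apply]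
  have key : ∀ k : Fin p, (weylV p)ᴴ r k * Gm p k s
      = if k = r - 1 then Gm p k s else 0 := by
    intro k
    rw [weylVH_apply]
    simp only [cond_iff hp2 r k]
    by_cases h : r = k + 1
    · have hk : k = r - 1 := by rw [h]; abel
      rw [if_pos h, if_pos hk, one_mul]
    · have hk : ¬ (k = r - 1) := fun hk => h (by rw [hk]; abel)
      rw [if_neg h, if_neg hk, zero_mul]
  rw [Finset.sum_congr rfl (fun k _ => key k), Finset.sum_ite_eq' Finset.univ (r-1)]
  simp only [Finset.mem_univ, if_true]
  rw [exp_eq_om_pow]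
  have hadd : (((r - 1 : Fin p) : ℕ) + 1) % p = (r : ℕ) := by
    have h1 : (r - 1 + 1 : Fin p) = r := by abel
    have h2 := congrArg Fin.val h1
    rwa [succ_val hp2] at h2
  have hab : ((r:ℕ)) % p = (((r - 1 : Fin p):ℕ) + 1) % p := by
    rw [Nat.mod_eq_of_lt r.isLt, hadd]
  have hrs : om p ^ ((r:ℕ) * (s:ℕ)) = om p ^ (((r-1 : Fin p):ℕ) * (s:ℕ)) * om p ^ (s:ℕ) := by
    rw [← pow_add]
    apply om_pow_congr hp
    rw [Nat.mul_mod, hab, ← Nat.mul_mod]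
    congr 1
    ring
  rw [Gm_apply, Gm_apply, hrs, mul_inv, div_mul_eq_mul_div, mul_assoc,
    inv_mul_cancel₀ (om_pow_ne_zero _), mul_one]

lemma Gm_mul_weylV [NeZero p] (hp2 : 2 ≤ p) : Gm p * weylV p = weylU p * Gm p := by
  have hp : p ≠ 0 := by omega
  ext r s
  rw [weylU, Matrix.diagonal_mul, Matrix.mul_apply]
  have key : ∀ k : Fin p, Gm p r k * weylV p k s
      = if k = s - 1 then Gm p r k else 0 := by
    intro k
    show Gm p r k * (if (s:ℕ) = ((k:ℕ)+1) % p then 1 else 0) = _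
    simp only [cond_iff hp2 s k]
    by_cases h : s = k + 1
    · have hk : k = s - 1 := by rw [h]; abel
      rw [if_pos h, if_pos hk, mul_one]
    · have hk : ¬ (k = s - 1) := fun hk => h (by rw [hk]; abel)
      rw [if_neg h, if_neg hk, mul_zero]
  rw [Finset.sum_congr rfl (fun k _ => key k), Finset.sum_ite_eq' Finset.univ (s-1)]
  simp only [Finset.mem_univ, if_true]
  rw [exp_eq_om_pow]
  have hadd : (((s - 1 : Fin p) : ℕ) + 1) % p = (s : ℕ) := by
    have h1 : (s - 1 + 1 : Fin p) = s := by abel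
    have h2 := congrArg Fin.val h1
    rwa [succ_val hp2] at h2
  have hab : ((s:ℕ)) % p = (((s - 1 : Fin p):ℕ) + 1) % p := by
    rw [Nat.mod_eq_of_lt s.isLt, hadd]
  have hrs : om p ^ ((r:ℕ) * (s:ℕ)) = om p ^ ((r:ℕ) * ((s-1 : Fin p):ℕ)) * om p ^ (r:ℕ) := by
    rw [← pow_add]
    apply om_pow_congr hp
    rw [Nat.mul_mod, hab, ← Nat.mul_mod]
    congr 1
  rw [Gm_apply, Gm_apply, hrs, mul_inv, ← mul_div_assoc,
    mul_comm ((om p ^ ((r:ℕ) * ((s - 1 : Fin p):ℕ)))⁻¹), ← mul_assoc,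
    mul_inv_cancel₀ (om_pow_ne_zero _), one_mul]

lemma GmH_mul_Gm [NeZero p] (hp2 : 2 ≤ p) : (Gm p)ᴴ * Gm p = 1 := by
  have hp : p ≠ 0 := by omega
  have hpc : (p : ℂ) ≠ 0 := by exact_mod_cast hp
  ext r s
  rw [Matrix.mul_apply, Matrix.one_apply]
  have key : ∀ k : Fin p, (Gm p)ᴴ r k * Gm p k s
      = (om p ^ (r:ℕ) / om p ^ (s:ℕ)) ^ (k:ℕ) / (p : ℂ) := by
    intro k
    rw [conjTranspose_apply, Gm_apply, Gm_apply, star_div₀, star_inv₀, star_om_pow, inv_inv]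
    have : star ((Real.sqrt p : ℝ) : ℂ) = ((Real.sqrt p : ℝ) : ℂ) := by
      exact Complex.conj_ofReal _
    rw [this]
    rw [div_pow]
    have e1 : om p ^ ((k:ℕ) * (r:ℕ)) = (om p ^ (r:ℕ)) ^ (k:ℕ) := by
      rw [← pow_mul]; congr 1; ring
    have e2 : om p ^ ((k:ℕ) * (s:ℕ)) = (om p ^ (s:ℕ)) ^ (k:ℕ) := by
      rw [← pow_mul]; congr 1; ring
    rw [e1, e2, div_eq_mul_inv, div_eq_mul_inv, div_eq_mul_inv, ← sqrtp_mul_self hp, mul_inv]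
    ring
  rw [Finset.sum_congr rfl (fun k _ => key k), ← Finset.sum_div]
  by_cases h : r = s
  · subst h
    rw [div_self (om_pow_ne_zero _)]
    simp [Finset.card_univ, hpc]
  · simp only [h, if_false]
    have hq1 : om p ^ (r:ℕ) / om p ^ (s:ℕ) ≠ 1 := by
      intro hq
      rw [div_eq_one_iff_eq (om_pow_ne_zero _)] at hq
      exact h (Fin.ext ((Complex.isPrimitiveRoot_exp p hp).pow_inj r.isLt s.isLt hq))
    have hsum : ∑ k : Fin p, (om p ^ (r:ℕ) / om p ^ (s:ℕ)) ^ (k:ℕ) = 0 := by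
      rw [Fin.sum_univ_eq_sum_range (fun k => (om p ^ (r:ℕ) / om p ^ (s:ℕ)) ^ k) p]
      rw [geom_sum_eq hq1]
      rw [div_pow, ← pow_mul, ← pow_mul, mul_comm (r:ℕ) p, mul_comm (s:ℕ) p,
        pow_mul, pow_mul, om_pow_p hp, one_pow, one_pow]
      simp
    rw [hsum, zero_div]

lemma Gm_mul_GmH [NeZero p] (hp2 : 2 ≤ p) : Gm p * (Gm p)ᴴ = 1 :=
  mul_eq_one_comm.mp (GmH_mul_Gm hp2)

lemma Gm_conj_U [NeZero p] (hp2 : 2 ≤ p) : Gm p * weylU p * (Gm p)ᴴ = (weylV p)ᴴ := by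
  rw [Gm_mul_weylU hp2, mul_assoc, Gm_mul_GmH hp2, mul_one]

lemma Gm_conj_V [NeZero p] (hp2 : 2 ≤ p) : Gm p * weylV p * (Gm p)ᴴ = weylU p := by
  rw [Gm_mul_weylV hp2, mul_assoc, Gm_mul_GmH hp2, mul_one]

lemma Gm_conj_UH [NeZero p] (hp2 : 2 ≤ p) : Gm p * (weylU p)ᴴ * (Gm p)ᴴ = weylV p := by
  have := congrArg conjTranspose (Gm_conj_U (p := p) hp2)
  rwa [conjTranspose_mul, conjTranspose_mul, conjTranspose_conjTranspose,
    conjTranspose_conjTranspose, ← mul_assoc] at this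

lemma Gm_conj_VH [NeZero p] (hp2 : 2 ≤ p) : Gm p * (weylV p)ᴴ * (Gm p)ᴴ = (weylU p)ᴴ := by
  have := congrArg conjTranspose (Gm_conj_V (p := p) hp2)
  rwa [conjTranspose_mul, conjTranspose_mul, conjTranspose_conjTranspose, ← mul_assoc] at this


section Kron

variable {p N : ℕ}

noncomputable def kron (p N : ℕ) (M : Fin N → Matrix (Fin p) (Fin p) ℂ) :
    Matrix (Fin N → Fin p) (Fin N → Fin p) ℂ :=
  Matrix.of fun f g => ∏ i, M i (f i) (g i)

lemma kron_apply (M : Fin N → Matrix (Fin p) (Fin p) ℂ) (f g : Fin N → Fin p) :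
    kron p N M f g = ∏ i, M i (f i) (g i) := rfl

lemma kron_mul (M M' : Fin N → Matrix (Fin p) (Fin p) ℂ) :
    kron p N M * kron p N M' = kron p N (fun i => M i * M' i) := by
  ext f g
  rw [Matrix.mul_apply]
  show (∑ h : Fin N → Fin p, (∏ i, M i (f i) (h i)) * ∏ i, M' i (h i) (g i))
      = ∏ i, (M i * M' i) (f i) (g i)
  have h1 : ∀ i : Fin N, (M i * M' i) (f i) (g i) = ∑ k ∈ Finset.univ, M i (f i) k * M' i k (g i) :=
    fun i => Matrix.mul_apply
  rw [Finset.prod_congr rfl (fun i _ => h1 i),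
    Finset.prod_univ_sum (fun _ => Finset.univ) (fun i k => M i (f i) k * M' i k (g i)),
    Fintype.piFinset_univ]
  exact Finset.sum_congr rfl fun h _ => (Finset.prod_mul_distrib).symm

lemma kron_conjTranspose (M : Fin N → Matrix (Fin p) (Fin p) ℂ) :
    (kron p N M)ᴴ = kron p N (fun i => (M i)ᴴ) := by
  ext f g
  rw [conjTranspose_apply, kron_apply, kron_apply]
  rw [star_prod]
  exact Finset.prod_congr rfl fun i _ => rfl

lemma kron_one : kron p N (fun _ => (1 : Matrix (Fin p) (Fin p) ℂ)) = 1 := by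
  ext f g
  show (∏ i, (1 : Matrix (Fin p) (Fin p) ℂ) (f i) (g i)) = (1 : Matrix _ _ ℂ) f g
  by_cases h : f = g
  · subst h
    simp [Matrix.one_apply]
  · obtain ⟨i, hi⟩ := Function.ne_iff.mp h
    rw [Matrix.one_apply_ne h]
    exact Finset.prod_eq_zero (Finset.mem_univ i) (Matrix.one_apply_ne hi)

lemma pSiteOp_eq_kron (A : Matrix (Fin p) (Fin p) ℂ) {k : ℕ} (hk : 1 ≤ k) (hk2 : k ≤ N) :
    pSiteOp p N A k
      = kron p N (fun j => if j = (⟨k - 1, by omega⟩ : Fin N) then A else 1) := by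
  have hkk : 1 ≤ k ∧ k ≤ N := ⟨hk, hk2⟩
  ext f g
  rw [pSiteOp, dif_pos hkk]
  show A (f ⟨k-1, by omega⟩) (g ⟨k-1, by omega⟩) * _ = _
  rw [kron_apply, ← Finset.mul_prod_erase Finset.univ _
    (Finset.mem_univ (⟨k - 1, by omega⟩ : Fin N)), if_pos rfl]
  congr 1
  apply Finset.prod_congr rfl
  intro j hj
  rw [if_neg (Finset.ne_of_mem_erase hj), Matrix.one_apply]

end Kron

section Perm

variable {I : Type*} [Fintype I] [DecidableEq I]

noncomputable def Pm (e : I ≃ I) : Matrix I I ℂ :=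
  Matrix.of fun f g => if g = e f then 1 else 0

lemma Pm_apply (e : I ≃ I) (f g : I) : Pm e f g = if g = e f then 1 else 0 := rfl

lemma PmH_apply (e : I ≃ I) (f g : I) : (Pm e)ᴴ f g = if f = e g then 1 else 0 := by
  rw [conjTranspose_apply, Pm_apply]
  split <;> simp

lemma Pm_mul_apply (e : I ≃ I) (X : Matrix I I ℂ) (f g : I) :
    (Pm e * X) f g = X (e f) g := by
  rw [Matrix.mul_apply]
  have : ∀ h, Pm e f h * X h g = if h = e f then X h g else 0 := by
    intro h
    rw [Pm_apply]
    split <;> simp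
  rw [Finset.sum_congr rfl (fun h _ => this h), Finset.sum_ite_eq' Finset.univ (e f)]
  simp

lemma mul_PmH_apply (e : I ≃ I) (X : Matrix I I ℂ) (f g : I) :
    (X * (Pm e)ᴴ) f g = X f (e g) := by
  rw [Matrix.mul_apply]
  have : ∀ h, X f h * (Pm e)ᴴ h g = if h = e g then X f h else 0 := by
    intro h
    rw [PmH_apply]
    split <;> simp
  rw [Finset.sum_congr rfl (fun h _ => this h), Finset.sum_ite_eq' Finset.univ (e g)]
  simp

lemma Pm_conj (e : I ≃ I) (X : Matrix I I ℂ) :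
    Pm e * X * (Pm e)ᴴ = Matrix.of fun f g => X (e f) (e g) := by
  ext f g
  rw [mul_PmH_apply, Pm_mul_apply]
  rfl

lemma Pm_mul_PmH (e : I ≃ I) : Pm e * (Pm e)ᴴ = 1 := by
  ext f g
  rw [mul_PmH_apply, Pm_apply, Matrix.one_apply]
  by_cases h : f = g
  · subst h; simp
  · rw [if_neg h, if_neg (fun hh => h (e.injective hh.symm))]

lemma PmH_mul_Pm (e : I ≃ I) : (Pm e)ᴴ * Pm e = 1 :=
  mul_eq_one_comm.mp (Pm_mul_PmH e)

end Perm


section Mu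

variable {p N : ℕ} [NeZero p]

def mu (p N : ℕ) [NeZero p] (t : Fin N → Fin p) : Fin N → Fin p :=
  fun i => ∑ j ∈ Finset.univ.filter (fun j => i ≤ j), t j

def unitv (p N : ℕ) [NeZero p] (a : Fin N) : Fin N → Fin p :=
  fun i => if i = a then 1 else 0

lemma mu_step (t : Fin N → Fin p) (i : Fin N) (hi : (i : ℕ) + 1 < N) :
    mu p N t i = t i + mu p N t ⟨(i : ℕ) + 1, hi⟩ := by
  unfold mu
  have hset : Finset.univ.filter (fun j => i ≤ j)
      = insert i (Finset.univ.filter (fun j : Fin N => (⟨(i:ℕ)+1, hi⟩ : Fin N) ≤ j)) := by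
    ext j
    simp only [Finset.mem_filter, Finset.mem_univ, true_and, Finset.mem_insert, Fin.le_def,
      Fin.ext_iff]
    omega
  rw [hset, Finset.sum_insert]
  simp only [Finset.mem_filter, Finset.mem_univ, true_and, Fin.le_def]
  omega

lemma mu_last (t : Fin N → Fin p) (i : Fin N) (hi : (i : ℕ) + 1 = N) :
    mu p N t i = t i := by
  unfold mu
  have hset : Finset.univ.filter (fun j => i ≤ j) = {i} := by
    ext j
    have := j.isLt
    simp only [Finset.mem_filter, Finset.mem_univ, true_and, Finset.mem_singleton, Fin.le_def,
      Fin.ext_iff]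
    omega
  rw [hset, Finset.sum_singleton]

lemma mu_add (t t' : Fin N → Fin p) : mu p N (t + t') = mu p N t + mu p N t' := by
  funext i
  simp [mu, Finset.sum_add_distrib]

lemma mu_sub (t t' : Fin N → Fin p) : mu p N (t - t') = mu p N t - mu p N t' := by
  funext i
  simp [mu, Finset.sum_sub_distrib]

lemma mu_inj : Function.Injective (mu p N) := by
  intro t t' h
  funext i
  by_cases hi : (i : ℕ) + 1 < N
  · have h1 := mu_step t i hi
    have h2 := mu_step t' i hi
    have e1 : mu p N t i = mu p N t' i := by rw [h]
    have e2 : mu p N t ⟨(i:ℕ)+1, hi⟩ = mu p N t' ⟨(i:ℕ)+1, hi⟩ := by rw [h]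
    rw [e2] at h1
    exact add_right_cancel ((h1.symm.trans e1).trans h2)
  · have hlast : (i : ℕ) + 1 = N := by have := i.isLt; omega
    rw [← mu_last t i hlast, ← mu_last t' i hlast, h]

noncomputable def sigmaP (p N : ℕ) [NeZero p] : (Fin N → Fin p) ≃ (Fin N → Fin p) :=
  Equiv.ofBijective (mu p N) (Finite.injective_iff_bijective.mp mu_inj)

lemma sigmaP_apply (t : Fin N → Fin p) : sigmaP p N t = mu p N t := rfl

lemma mu_unitv (a i : Fin N) : mu p N (unitv p N a) i = if i ≤ a then 1 else 0 := by
  unfold mu unitv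
  rw [Finset.sum_ite_eq' (Finset.univ.filter (fun j => i ≤ j)) a (fun _ => (1 : Fin p))]
  simp

lemma mu_unitv_sub (a a' : Fin N) (ha : (a' : ℕ) + 1 = (a : ℕ)) :
    mu p N (unitv p N a - unitv p N a') = unitv p N a := by
  rw [mu_sub]
  funext i
  simp only [Pi.sub_apply, mu_unitv, unitv]
  by_cases h1 : i = a
  · subst h1
    rw [if_pos le_rfl, if_neg (by rw [Fin.le_def]; omega), if_pos rfl, sub_zero]
  · rw [if_neg h1]
    by_cases h2 : i ≤ a'
    · rw [if_pos h2, if_pos (by rw [Fin.le_def] at *; omega), sub_self]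
    · have h3 : ¬ i ≤ a := by
        rw [Fin.le_def] at *
        rw [Fin.ext_iff] at h1
        omega
      rw [if_neg h3, if_neg h2, sub_zero]

lemma mu_unitv_zero (hN : 0 < N) : mu p N (unitv p N ⟨0, hN⟩) = unitv p N ⟨0, hN⟩ := by
  funext i
  rw [mu_unitv, unitv]
  congr 1
  simp only [eq_iff_iff, Fin.le_def, Fin.ext_iff]
  omega

end Mu

section Ops

variable {p N : ℕ} [NeZero p]

noncomputable def dOp (p N : ℕ) (γ : (Fin N → Fin p) → ℂ) :
    Matrix (Fin N → Fin p) (Fin N → Fin p) ℂ :=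
  Matrix.of fun f g => if f = g then γ f else 0

noncomputable def sOp (p N : ℕ) [NeZero p] (x : Fin N → Fin p) :
    Matrix (Fin N → Fin p) (Fin N → Fin p) ℂ :=
  Matrix.of fun f g => if f = g + x then 1 else 0

lemma dOp_mul (γ β : (Fin N → Fin p) → ℂ) :
    dOp p N γ * dOp p N β = dOp p N (fun f => γ f * β f) := by
  ext f g
  rw [Matrix.mul_apply]
  show (∑ h, (if f = h then γ f else 0) * (if h = g then β h else 0)) = _
  have : ∀ h, (if f = h then γ f else 0) * (if h = g then β h else 0)
      = if h = f then (if f = g then γ f * β f else 0) else 0 := by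
    intro h
    by_cases h1 : f = h
    · subst h1
      by_cases h2 : f = g
      · subst h2; simp
      · simp [h2]
    · rw [if_neg h1, zero_mul, if_neg (fun hh => h1 hh.symm)]
  rw [Finset.sum_congr rfl (fun h _ => this h), Finset.sum_ite_eq' Finset.univ f]
  simp only [Finset.mem_univ, if_true]
  rfl

lemma dOp_conjTranspose (γ : (Fin N → Fin p) → ℂ) :
    (dOp p N γ)ᴴ = dOp p N (fun f => star (γ f)) := by
  ext f g
  rw [conjTranspose_apply]
  show star (if g = f then γ g else 0) = if f = g then star (γ f) else 0
  by_cases h : f = g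
  · subst h; simp
  · rw [if_neg (fun hh => h hh.symm), if_neg h, star_zero]

lemma sOp_mul (x y : Fin N → Fin p) :
    sOp p N x * sOp p N y = sOp p N (x + y) := by
  ext f g
  rw [Matrix.mul_apply]
  show (∑ h, (if f = h + x then (1:ℂ) else 0) * (if h = g + y then 1 else 0)) = _
  have : ∀ h, (if f = h + x then (1:ℂ) else 0) * (if h = g + y then 1 else 0)
      = if h = g + y then (if f = g + (x + y) then 1 else 0) else 0 := by
    intro h
    by_cases h2 : h = g + y
    · subst h2
      have hc : (if (g + y : Fin N → Fin p) = g + y then (1:ℂ) else 0) = 1 := if_pos rfl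
      calc (if f = g + y + x then (1:ℂ) else 0) * (if g + y = g + y then (1:ℂ) else 0)
          = (if f = g + y + x then (1:ℂ) else 0) := by rw [hc, mul_one]
        _ = (if f = g + (x + y) then (1:ℂ) else 0) :=
            if_congr (by constructor <;> intro hh <;> rw [hh] <;> abel) rfl rfl
        _ = _ := (if_pos rfl).symm
    · rw [if_neg h2, mul_zero, if_neg h2]
  rw [Finset.sum_congr rfl (fun h _ => this h), Finset.sum_ite_eq' Finset.univ (g + y)]
  simp only [Finset.mem_univ, if_true]
  rfl

end Ops


section Ident

variable {p N : ℕ} [NeZero p]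

lemma ite_mul_ite_one {c d : Prop} [Decidable c] [Decidable d] :
    (if c then (1:ℂ) else 0) * (if d then 1 else 0) = if c ∧ d then 1 else 0 := by
  by_cases hc : c <;> by_cases hd : d <;> simp [hc, hd]

lemma pSiteOp_apply (A : Matrix (Fin p) (Fin p) ℂ) {k : ℕ} (hk : 1 ≤ k) (hk2 : k ≤ N)
    (f g : Fin N → Fin p) :
    pSiteOp p N A k f g
      = A (f ⟨k - 1, by omega⟩) (g ⟨k - 1, by omega⟩) *
          (if ∀ j, j ≠ (⟨k - 1, by omega⟩ : Fin N) → f j = g j then 1 else 0) := by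
  rw [pSiteOp, dif_pos ⟨hk, hk2⟩]
  simp only [Matrix.of_apply]
  congr 1
  rw [Finset.prod_boole]
  by_cases h : ∀ j, j ≠ (⟨k - 1, by omega⟩ : Fin N) → f j = g j
  · rw [if_pos h, if_pos (fun j hj => h j (Finset.mem_erase.mp hj).1)]
  · rw [if_neg h, if_neg (fun hall => h fun j hj =>
      hall j (Finset.mem_erase.mpr ⟨hj, Finset.mem_univ j⟩))]

lemma pSiteOpU_eq_dOp {k : ℕ} (hk : 1 ≤ k) (hk2 : k ≤ N) :
    pSiteOp p N (weylU p) k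
      = dOp p N (fun f => om p ^ ((f ⟨k - 1, by omega⟩ : Fin p) : ℕ)) := by
  set a : Fin N := ⟨k - 1, by omega⟩ with ha
  ext f g
  rw [pSiteOp_apply (weylU p) hk hk2, weylU_apply]
  show _ = if f = g then om p ^ ((f a : Fin p) : ℕ) else 0
  by_cases h : f = g
  · subst h
    rw [if_pos rfl, if_pos rfl, if_pos (fun j _ => rfl), mul_one]
  · rw [if_neg h]
    by_cases h1 : f a = g a
    · have h2 : ¬ (∀ j, j ≠ a → f j = g j) := by
        intro hall
        apply h
        funext j
        by_cases hj : j = a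
        · rw [hj]; exact h1
        · exact hall j hj
      rw [if_neg h2, mul_zero]
    · rw [if_neg h1, zero_mul]

lemma pSiteOpUH_eq_dOp {k : ℕ} (hk : 1 ≤ k) (hk2 : k ≤ N) :
    (pSiteOp p N (weylU p) k)ᴴ
      = dOp p N (fun f => (om p ^ ((f ⟨k - 1, by omega⟩ : Fin p) : ℕ))⁻¹) := by
  have hst : (fun f : Fin N → Fin p => star (om p ^ ((f ⟨k - 1, by omega⟩ : Fin p) : ℕ)))
      = fun f : Fin N → Fin p => (om p ^ ((f ⟨k - 1, by omega⟩ : Fin p) : ℕ))⁻¹ :=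
    funext fun f => star_om_pow _
  rw [pSiteOpU_eq_dOp hk hk2, dOp_conjTranspose, hst]

lemma add_unitv_apply (g : Fin N → Fin p) (a j : Fin N) :
    (g + unitv p N a) j = g j + (if j = a then 1 else 0) := rfl

lemma eq_add_unitv_iff (f g : Fin N → Fin p) (a : Fin N) :
    f = g + unitv p N a ↔ (f a = g a + 1 ∧ ∀ j, j ≠ a → f j = g j) := by
  constructor
  · intro h
    subst h
    constructor
    · rw [add_unitv_apply, if_pos rfl]
    · intro j hj
      rw [add_unitv_apply, if_neg hj, add_zero]
  · rintro ⟨h1, h2⟩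
    funext j
    by_cases hj : j = a
    · subst hj
      rw [add_unitv_apply, if_pos rfl]; exact h1
    · rw [add_unitv_apply, if_neg hj, add_zero]; exact h2 j hj

lemma pSiteOpVH_eq_sOp (hp2 : 2 ≤ p) {k : ℕ} (hk : 1 ≤ k) (hk2 : k ≤ N) :
    (pSiteOp p N (weylV p) k)ᴴ = sOp p N (unitv p N ⟨k - 1, by omega⟩) := by
  set a : Fin N := ⟨k - 1, by omega⟩ with ha
  ext f g
  rw [conjTranspose_apply, pSiteOp_apply (weylV p) hk hk2]
  show star ((if ((f a : Fin p) : ℕ) = (((g a : Fin p) : ℕ) + 1) % p then (1:ℂ) else 0) * _) = _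
  rw [ite_mul_ite_one, apply_ite star, star_one, star_zero]
  show _ = if f = g + unitv p N a then (1:ℂ) else 0
  apply if_congr _ rfl rfl
  rw [cond_iff hp2, eq_add_unitv_iff]
  constructor
  · rintro ⟨h1, h2⟩; exact ⟨h1, fun j hj => (h2 j hj).symm⟩
  · rintro ⟨h1, h2⟩; exact ⟨h1, fun j hj => (h2 j hj).symm⟩

lemma pSiteOpV_eq_sOp (hp2 : 2 ≤ p) {k : ℕ} (hk : 1 ≤ k) (hk2 : k ≤ N) :
    pSiteOp p N (weylV p) k = sOp p N (-(unitv p N ⟨k - 1, by omega⟩)) := by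
  set a : Fin N := ⟨k - 1, by omega⟩ with ha
  ext f g
  rw [pSiteOp_apply (weylV p) hk hk2]
  show (if ((g a : Fin p) : ℕ) = (((f a : Fin p) : ℕ) + 1) % p then (1:ℂ) else 0) * _
      = if f = g + -(unitv p N a) then (1:ℂ) else 0
  rw [ite_mul_ite_one]
  apply if_congr _ rfl rfl
  rw [cond_iff hp2]
  have : f = g + -(unitv p N a) ↔ g = f + unitv p N a := by
    constructor <;> intro h <;> rw [h] <;> abel
  rw [this, eq_add_unitv_iff]
  constructor
  · rintro ⟨h1, h2⟩; exact ⟨h1, fun j hj => (h2 j hj).symm⟩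
  · rintro ⟨h1, h2⟩; exact ⟨h1, fun j hj => (h2 j hj).symm⟩

end Ident

section ConjP

variable {p N : ℕ} [NeZero p]

lemma conjP_dOp (γ : (Fin N → Fin p) → ℂ) :
    Pm (sigmaP p N) * dOp p N γ * (Pm (sigmaP p N))ᴴ = dOp p N (fun f => γ (mu p N f)) := by
  rw [Pm_conj]
  ext f g
  show (if mu p N f = mu p N g then γ (mu p N f) else 0) = if f = g then γ (mu p N f) else 0
  apply if_congr _ rfl rfl
  exact ⟨fun h => mu_inj h, fun h => by rw [h]⟩

lemma conjP_sOp (w : Fin N → Fin p) :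
    Pm (sigmaP p N) * sOp p N (mu p N w) * (Pm (sigmaP p N))ᴴ = sOp p N w := by
  rw [Pm_conj]
  ext f g
  show (if mu p N f = mu p N g + mu p N w then (1:ℂ) else 0) = if f = g + w then 1 else 0
  apply if_congr _ rfl rfl
  rw [← mu_add]
  exact ⟨fun h => mu_inj h, fun h => by rw [h]⟩

end ConjP


section GR

variable {p N : ℕ} [NeZero p]

noncomputable def GN (p N : ℕ) : Matrix (Fin N → Fin p) (Fin N → Fin p) ℂ :=
  kron p N (fun _ => Gm p)

lemma GN_conj (M : Fin N → Matrix (Fin p) (Fin p) ℂ) :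
    GN p N * kron p N M * (GN p N)ᴴ = kron p N (fun i => Gm p * M i * (Gm p)ᴴ) := by
  rw [GN, kron_conjTranspose, kron_mul, kron_mul]

lemma GN_mul_GNH (hp2 : 2 ≤ p) : GN p N * (GN p N)ᴴ = 1 := by
  rw [GN, kron_conjTranspose, kron_mul]
  have h : (fun _ : Fin N => Gm p * (Gm p)ᴴ) = fun _ => (1 : Matrix (Fin p) (Fin p) ℂ) :=
    funext fun _ => Gm_mul_GmH hp2
  rw [h, kron_one]

lemma GNH_mul_GN (hp2 : 2 ≤ p) : (GN p N)ᴴ * GN p N = 1 :=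
  mul_eq_one_comm.mp (GN_mul_GNH hp2)

noncomputable def revE (p N : ℕ) : (Fin N → Fin p) ≃ (Fin N → Fin p) :=
  Equiv.arrowCongr Fin.revPerm (Equiv.refl (Fin p))

lemma revE_apply (f : Fin N → Fin p) (i : Fin N) : revE p N f i = f (Fin.rev i) := rfl

lemma conjR_kron (M : Fin N → Matrix (Fin p) (Fin p) ℂ) :
    Pm (revE p N) * kron p N M * (Pm (revE p N))ᴴ = kron p N (fun i => M (Fin.rev i)) := by
  rw [Pm_conj]
  ext f g
  show kron p N M (revE p N f) (revE p N g) = kron p N (fun i => M (Fin.rev i)) f g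
  rw [kron_apply, kron_apply]
  conv_lhs => rw [← Equiv.prod_comp (Fin.revPerm (n := N))
    (fun j => M j (revE p N f j) (revE p N g j))]
  apply Finset.prod_congr rfl
  intro i _
  show M (Fin.rev i) (revE p N f (Fin.rev i)) (revE p N g (Fin.rev i)) = _
  rw [revE_apply, revE_apply, Fin.rev_rev]

lemma kron_ite_H (A : Matrix (Fin p) (Fin p) ℂ) (a : Fin N) :
    (kron p N (fun j => if j = a then A else 1))ᴴ
      = kron p N (fun j => if j = a then Aᴴ else 1) := by
  rw [kron_conjTranspose]
  have h : (fun j => (if j = a then A else (1 : Matrix (Fin p) (Fin p) ℂ))ᴴ)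
      = fun j => if j = a then Aᴴ else (1 : Matrix (Fin p) (Fin p) ℂ) := by
    funext j
    split
    · rfl
    · exact conjTranspose_one
  rw [h]

lemma mulH_two_site (A B : Matrix (Fin p) (Fin p) ℂ) {k l : ℕ}
    (hk : 1 ≤ k) (hk2 : k ≤ N) (hl : 1 ≤ l) (hl2 : l ≤ N) (hkl : k ≠ l) :
    (pSiteOp p N A k)ᴴ * pSiteOp p N B l
      = kron p N (fun j => if j = (⟨k - 1, by omega⟩ : Fin N) then Aᴴ
          else if j = (⟨l - 1, by omega⟩ : Fin N) then B else 1) := by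
  have hne : (⟨k - 1, by omega⟩ : Fin N) ≠ (⟨l - 1, by omega⟩ : Fin N) := by
    simp only [ne_eq, Fin.ext_iff]
    omega
  rw [pSiteOp_eq_kron A hk hk2, kron_ite_H, pSiteOp_eq_kron B hl hl2, kron_mul]
  have h : (fun j => (if j = (⟨k - 1, by omega⟩ : Fin N) then Aᴴ else 1)
        * (if j = (⟨l - 1, by omega⟩ : Fin N) then B else 1))
      = fun j => if j = (⟨k - 1, by omega⟩ : Fin N) then Aᴴ
          else if j = (⟨l - 1, by omega⟩ : Fin N) then B else (1 : Matrix (Fin p) (Fin p) ℂ) := by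
    funext j
    by_cases h1 : j = (⟨k - 1, by omega⟩ : Fin N)
    · rw [if_pos h1, if_pos h1, if_neg (h1 ▸ hne), mul_one]
    · rw [if_neg h1, if_neg h1, one_mul]
  rw [h]

-- The duality unitary.
noncomputable def UD (p N : ℕ) [NeZero p] : Matrix (Fin N → Fin p) (Fin N → Fin p) ℂ :=
  Pm (revE p N) * GN p N * Pm (sigmaP p N)

lemma triple_conj {I : Type*} [Fintype I] [DecidableEq I] (A B C X : Matrix I I ℂ) :
    (A * B * C) * X * (A * B * C)ᴴ = A * (B * (C * X * Cᴴ) * Bᴴ) * Aᴴ := by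
  rw [conjTranspose_mul, conjTranspose_mul]
  simp only [Matrix.mul_assoc]

lemma UD_mul_UDH (hp2 : 2 ≤ p) : UD p N * (UD p N)ᴴ = 1 := by
  rw [UD]
  have h : (Pm (revE p N) * GN p N * Pm (sigmaP p N)) * (Pm (revE p N) * GN p N * Pm (sigmaP p N))ᴴ
      = Pm (revE p N) * (GN p N * (Pm (sigmaP p N) * (Pm (sigmaP p N))ᴴ) * (GN p N)ᴴ)
        * (Pm (revE p N))ᴴ := by
    rw [conjTranspose_mul, conjTranspose_mul]
    simp only [Matrix.mul_assoc]
  rw [h, Pm_mul_PmH, Matrix.mul_one, GN_mul_GNH hp2, Matrix.mul_one, Pm_mul_PmH]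

lemma UDH_mul_UD (hp2 : 2 ≤ p) : (UD p N)ᴴ * UD p N = 1 :=
  mul_eq_one_comm.mp (UD_mul_UDH hp2)

lemma UD_conj (X : Matrix (Fin N → Fin p) (Fin N → Fin p) ℂ) :
    UD p N * X * (UD p N)ᴴ
      = Pm (revE p N) * (GN p N *
          (Pm (sigmaP p N) * X * (Pm (sigmaP p N))ᴴ) * (GN p N)ᴴ) * (Pm (revE p N))ᴴ :=
  triple_conj _ _ _ _

lemma om_fin_add (hp : p ≠ 0) (x y : Fin p) :
    om p ^ ((x + y : Fin p) : ℕ) = om p ^ (x : ℕ) * om p ^ (y : ℕ) := by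
  have h : ((x + y : Fin p) : ℕ) = ((x : ℕ) + (y : ℕ)) % p := by
    rw [Fin.add_def]
  rw [h, om_pow_mod hp, pow_add]

-- reindexing of single-site ite families under rev
lemma rev_ite (A : Matrix (Fin p) (Fin p) ℂ) (a b : Fin N) (hab : (a : ℕ) + (b : ℕ) = N - 1) :
    (fun i => if Fin.rev i = a then A else (1 : Matrix (Fin p) (Fin p) ℂ))
      = fun i => if i = b then A else 1 := by
  funext i
  apply if_congr _ rfl rfl
  rw [Fin.ext_iff, Fin.ext_iff, Fin.val_rev]
  have := i.isLt
  have := a.isLt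
  omega

lemma rev_ite2 (A B : Matrix (Fin p) (Fin p) ℂ) (a a' b b' : Fin N)
    (hab : (a : ℕ) + (b : ℕ) = N - 1) (hab' : (a' : ℕ) + (b' : ℕ) = N - 1) :
    (fun i => if Fin.rev i = a then A else if Fin.rev i = a' then B
        else (1 : Matrix (Fin p) (Fin p) ℂ))
      = fun i => if i = b then A else if i = b' then B else 1 := by
  funext i
  have h1 : (Fin.rev i = a) ↔ (i = b) := by
    rw [Fin.ext_iff, Fin.ext_iff, Fin.val_rev]
    have := i.isLt; have := a.isLt; omega
  have h2 : (Fin.rev i = a') ↔ (i = b') := by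
    rw [Fin.ext_iff, Fin.ext_iff, Fin.val_rev]
    have := i.isLt; have := a'.isLt; omega
  rw [if_congr h1 rfl (if_congr h2 rfl rfl)]

lemma Gm_conj_ite (hp2 : 2 ≤ p) (A B : Matrix (Fin p) (Fin p) ℂ) (a : Fin N)
    (hAB : Gm p * A * (Gm p)ᴴ = B) :
    (fun i => Gm p * (if i = a then A else 1) * (Gm p)ᴴ)
      = fun i => if i = a then B else (1 : Matrix (Fin p) (Fin p) ℂ) := by
  funext i
  split
  · exact hAB
  · rw [Matrix.mul_one, Gm_mul_GmH hp2]

lemma Gm_conj_ite2 (hp2 : 2 ≤ p) (A B A' B' : Matrix (Fin p) (Fin p) ℂ) (a a' : Fin N)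
    (hAB : Gm p * A * (Gm p)ᴴ = B) (hAB' : Gm p * A' * (Gm p)ᴴ = B') :
    (fun i => Gm p * (if i = a then A else if i = a' then A' else 1) * (Gm p)ᴴ)
      = fun i => if i = a then B else if i = a' then B' else (1 : Matrix (Fin p) (Fin p) ℂ) := by
  funext i
  split
  · exact hAB
  · split
    · exact hAB'
    · rw [Matrix.mul_one, Gm_mul_GmH hp2]

end GR

section Relations

variable {p N : ℕ} [NeZero p]

lemma rel1 (hp2 : 2 ≤ p) (hN : 2 ≤ N) :
    UD p N * pSiteOp p N (weylU p) N * (UD p N)ᴴ = (pSiteOp p N (weylV p) 1)ᴴ := by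
  have hN1 : 1 ≤ N := by omega
  rw [UD_conj]
  -- P step
  rw [pSiteOpU_eq_dOp hN1 le_rfl, conjP_dOp]
  have hmu : (fun f : Fin N → Fin p => om p ^ ((mu p N f ⟨N - 1, by omega⟩ : Fin p) : ℕ))
      = fun f => om p ^ ((f ⟨N - 1, by omega⟩ : Fin p) : ℕ) :=
    funext fun f => by rw [mu_last f _ (by simp; omega)]
  rw [hmu, ← pSiteOpU_eq_dOp hN1 le_rfl]
  -- G step
  rw [pSiteOp_eq_kron (weylU p) hN1 le_rfl, GN_conj,
    Gm_conj_ite hp2 (weylU p) ((weylV p)ᴴ) _ (Gm_conj_U hp2)]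
  -- R step
  rw [conjR_kron, rev_ite ((weylV p)ᴴ) ⟨N - 1, by omega⟩ ⟨0, by omega⟩ (by simp)]
  rw [← kron_ite_H, ← pSiteOp_eq_kron (weylV p) le_rfl hN1]

set_option maxHeartbeats 2000000 in
lemma rel2 (hp2 : 2 ≤ p) (hN : 2 ≤ N) :
    UD p N * (pSiteOp p N (weylV p) 1)ᴴ * (UD p N)ᴴ = (pSiteOp p N (weylU p) N)ᴴ := by
  have hN1 : 1 ≤ N := by omega
  rw [UD_conj]
  rw [pSiteOpVH_eq_sOp hp2 le_rfl hN1]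
  have h0 : (⟨1 - 1, by omega⟩ : Fin N) = ⟨0, by omega⟩ := rfl
  rw [h0]
  conv_lhs => rw [← mu_unitv_zero (by omega : 0 < N)]
  rw [conjP_sOp, ← h0, ← pSiteOpVH_eq_sOp hp2 le_rfl hN1]
  rw [pSiteOp_eq_kron (weylV p) le_rfl hN1, kron_ite_H, GN_conj,
    Gm_conj_ite hp2 ((weylV p)ᴴ) ((weylU p)ᴴ) _ (Gm_conj_VH hp2)]
  rw [conjR_kron, rev_ite ((weylU p)ᴴ) ⟨1 - 1, by omega⟩ ⟨N - 1, by omega⟩ (by simp)]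
  rw [← kron_ite_H, ← pSiteOp_eq_kron (weylU p) hN1 le_rfl]

set_option maxHeartbeats 2000000 in
lemma rel3 (hp2 : 2 ≤ p) (hN : 2 ≤ N) (i : ℕ) (hi1 : 1 ≤ i) (hi2 : i ≤ N - 1) :
    UD p N * (pSiteOp p N (weylU p) i * (pSiteOp p N (weylU p) (i + 1))ᴴ) * (UD p N)ᴴ
      = (pSiteOp p N (weylV p) (N + 1 - i))ᴴ := by
  have hp : p ≠ 0 := by omega
  rw [UD_conj]
  rw [pSiteOpU_eq_dOp hi1 (by omega), pSiteOpUH_eq_dOp (by omega : 1 ≤ i + 1) (by omega),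
    dOp_mul, conjP_dOp]
  have hidx : (⟨i + 1 - 1, by omega⟩ : Fin N) = ⟨(i - 1) + 1, by omega⟩ := by
    simp only [Fin.ext_iff]; omega
  have hmu : (fun f : Fin N → Fin p =>
      om p ^ ((mu p N f ⟨i - 1, by omega⟩ : Fin p) : ℕ)
        * (om p ^ ((mu p N f ⟨i + 1 - 1, by omega⟩ : Fin p) : ℕ))⁻¹)
      = fun f => om p ^ ((f ⟨i - 1, by omega⟩ : Fin p) : ℕ) := by
    funext f
    rw [hidx, mu_step f ⟨i - 1, by omega⟩ (by simp; omega)]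
    rw [om_fin_add hp, mul_assoc, mul_inv_cancel₀ (om_pow_ne_zero _), mul_one]
  rw [hmu, ← pSiteOpU_eq_dOp hi1 (by omega)]
  rw [pSiteOp_eq_kron (weylU p) hi1 (by omega), GN_conj,
    Gm_conj_ite hp2 (weylU p) ((weylV p)ᴴ) _ (Gm_conj_U hp2)]
  rw [conjR_kron, rev_ite ((weylV p)ᴴ) ⟨i - 1, by omega⟩ ⟨N + 1 - i - 1, by omega⟩ (by simp; omega)]
  rw [← kron_ite_H, ← pSiteOp_eq_kron (weylV p) (by omega) (by omega)]

set_option maxHeartbeats 2000000 in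
lemma rel4 (hp2 : 2 ≤ p) (hN : 2 ≤ N) (i : ℕ) (hi1 : 2 ≤ i) (hi2 : i ≤ N) :
    UD p N * (pSiteOp p N (weylV p) i)ᴴ * (UD p N)ᴴ
      = (pSiteOp p N (weylU p) (N + 1 - i))ᴴ * pSiteOp p N (weylU p) (N + 1 - i + 1) := by
  have hp : p ≠ 0 := by omega
  rw [UD_conj]
  rw [pSiteOpVH_eq_sOp hp2 (by omega) hi2]
  have hw : unitv p N ⟨i - 1, by omega⟩
      = mu p N (unitv p N ⟨i - 1, by omega⟩ - unitv p N ⟨i - 2, by omega⟩) := by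
    rw [mu_unitv_sub _ _ (by simp; omega)]
  conv_lhs => rw [hw]
  rw [conjP_sOp, sub_eq_add_neg, ← sOp_mul,
    ← pSiteOpVH_eq_sOp hp2 (by omega : 1 ≤ i) hi2]
  have hidx : (⟨i - 2, by omega⟩ : Fin N) = ⟨i - 1 - 1, by omega⟩ := by
    simp only [Fin.ext_iff]; omega
  rw [hidx, ← pSiteOpV_eq_sOp hp2 (by omega : 1 ≤ i - 1) (by omega)]
  rw [mulH_two_site (weylV p) (weylV p) (by omega : 1 ≤ i) hi2 (by omega : 1 ≤ i - 1)
    (by omega) (by omega), GN_conj,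
    Gm_conj_ite2 hp2 ((weylV p)ᴴ) ((weylU p)ᴴ) (weylV p) (weylU p) _ _
      (Gm_conj_VH hp2) (Gm_conj_V hp2)]
  rw [conjR_kron,
    rev_ite2 ((weylU p)ᴴ) (weylU p) ⟨i - 1, by omega⟩ ⟨i - 1 - 1, by omega⟩
      ⟨N + 1 - i - 1, by omega⟩ ⟨N + 1 - i + 1 - 1, by omega⟩ (by simp; omega) (by simp; omega)]
  rw [← mulH_two_site (weylU p) (weylU p) (by omega : 1 ≤ N + 1 - i) (by omega)
    (by omega : 1 ≤ N + 1 - i + 1) (by omega) (by omega)]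

end Relations


section Ham

variable {p N : ℕ} [NeZero p]

section ConjAlg

variable {I : Type*} [Fintype I] [DecidableEq I]

lemma conj_add (W X Y : Matrix I I ℂ) :
    W * (X + Y) * Wᴴ = W * X * Wᴴ + W * Y * Wᴴ := by
  rw [Matrix.mul_add, Matrix.add_mul]

lemma conj_smul (W : Matrix I I ℂ) (c : ℂ) (X : Matrix I I ℂ) :
    W * (c • X) * Wᴴ = c • (W * X * Wᴴ) := by
  rw [Matrix.mul_smul, Matrix.smul_mul]

lemma conj_neg (W X : Matrix I I ℂ) : W * (-X) * Wᴴ = -(W * X * Wᴴ) := by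
  rw [Matrix.mul_neg, Matrix.neg_mul]

lemma conj_sub (W X Y : Matrix I I ℂ) :
    W * (X - Y) * Wᴴ = W * X * Wᴴ - W * Y * Wᴴ := by
  rw [Matrix.mul_sub, Matrix.sub_mul]

lemma conj_sum {ι : Type*} (W : Matrix I I ℂ) (s : Finset ι) (F : ι → Matrix I I ℂ) :
    W * (∑ i ∈ s, F i) * Wᴴ = ∑ i ∈ s, W * F i * Wᴴ := by
  rw [Finset.mul_sum, Finset.sum_mul]

lemma conj_H (W X : Matrix I I ℂ) : W * Xᴴ * Wᴴ = (W * X * Wᴴ)ᴴ := by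
  rw [conjTranspose_mul, conjTranspose_mul, conjTranspose_conjTranspose, Matrix.mul_assoc]

lemma conj_of_conj_H (W X Y : Matrix I I ℂ) (h : W * Xᴴ * Wᴴ = Y) :
    W * X * Wᴴ = Yᴴ := by
  have h2 := congrArg conjTranspose h
  rwa [← conj_H, conjTranspose_conjTranspose] at h2

end ConjAlg

lemma two_site_mulH (A B : Matrix (Fin p) (Fin p) ℂ) {k l : ℕ}
    (hk : 1 ≤ k) (hk2 : k ≤ N) (hl : 1 ≤ l) (hl2 : l ≤ N) (hkl : k ≠ l) :
    pSiteOp p N B l * (pSiteOp p N A k)ᴴ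
      = kron p N (fun j => if j = (⟨k - 1, by omega⟩ : Fin N) then Aᴴ
          else if j = (⟨l - 1, by omega⟩ : Fin N) then B else 1) := by
  have hne : (⟨k - 1, by omega⟩ : Fin N) ≠ (⟨l - 1, by omega⟩ : Fin N) := by
    simp only [ne_eq, Fin.ext_iff]
    omega
  rw [pSiteOp_eq_kron A hk hk2, kron_ite_H, pSiteOp_eq_kron B hl hl2, kron_mul]
  have h : (fun j => (if j = (⟨l - 1, by omega⟩ : Fin N) then B else 1)
        * (if j = (⟨k - 1, by omega⟩ : Fin N) then Aᴴ else 1))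
      = fun j => if j = (⟨k - 1, by omega⟩ : Fin N) then Aᴴ
          else if j = (⟨l - 1, by omega⟩ : Fin N) then B else (1 : Matrix (Fin p) (Fin p) ℂ) := by
    funext j
    by_cases h1 : j = (⟨k - 1, by omega⟩ : Fin N)
    · rw [if_pos h1, if_pos h1, if_neg (h1 ▸ (Ne.symm hne ∘ Eq.symm)), one_mul]
    · rw [if_neg h1, if_neg h1, mul_one]
  rw [h]

lemma HmulComm (A B : Matrix (Fin p) (Fin p) ℂ) {k l : ℕ}
    (hk : 1 ≤ k) (hk2 : k ≤ N) (hl : 1 ≤ l) (hl2 : l ≤ N) (hkl : k ≠ l) :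
    (pSiteOp p N A k)ᴴ * pSiteOp p N B l = pSiteOp p N B l * (pSiteOp p N A k)ᴴ :=
  (mulH_two_site A B hk hk2 hl hl2 hkl).trans (two_site_mulH A B hk hk2 hl hl2 hkl).symm

lemma relH (hp2 : 2 ≤ p) (hN : 2 ≤ N) (lam : ℝ) (hlam : lam ≠ 0) :
    UD p N * vpSD p N lam * (UD p N)ᴴ = (lam : ℂ) • vpSD p N (1 / lam) := by
  set c : ℂ := (lam : ℂ) with hc
  have hcne : c ≠ 0 := by
    simp only [hc, ne_eq, Complex.ofReal_eq_zero]
    exact hlam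
  -- per-term images
  have hCB : UD p N * (pSiteOp p N (weylU p) N + (pSiteOp p N (weylU p) N)ᴴ) * (UD p N)ᴴ
      = pSiteOp p N (weylV p) 1 + (pSiteOp p N (weylV p) 1)ᴴ := by
    rw [conj_add, rel1 hp2 hN, conj_H, rel1 hp2 hN, conjTranspose_conjTranspose]
    exact add_comm _ _
  have hCV1 : UD p N * (pSiteOp p N (weylV p) 1 + (pSiteOp p N (weylV p) 1)ᴴ) * (UD p N)ᴴ
      = pSiteOp p N (weylU p) N + (pSiteOp p N (weylU p) N)ᴴ := by
    rw [conj_add, rel2 hp2 hN,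
      conj_of_conj_H _ _ _ (rel2 hp2 hN), conjTranspose_conjTranspose]
  have hCV : ∀ i : ℕ, 2 ≤ i → i ≤ N →
      UD p N * (pSiteOp p N (weylV p) i + (pSiteOp p N (weylV p) i)ᴴ) * (UD p N)ᴴ
        = pSiteOp p N (weylU p) (N + 1 - i) * (pSiteOp p N (weylU p) (N + 1 - i + 1))ᴴ
          + (pSiteOp p N (weylU p) (N + 1 - i))ᴴ * pSiteOp p N (weylU p) (N + 1 - i + 1) := by
    intro i hi1 hi2
    rw [conj_add, rel4 hp2 hN i hi1 hi2,
      conj_of_conj_H _ _ _ (rel4 hp2 hN i hi1 hi2),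
      conjTranspose_mul, conjTranspose_conjTranspose,
      HmulComm (weylU p) (weylU p) (by omega : 1 ≤ N + 1 - i + 1) (by omega)
        (by omega : 1 ≤ N + 1 - i) (by omega) (by omega)]
  have hCbond : ∀ i : ℕ, 1 ≤ i → i ≤ N - 1 →
      UD p N * (pSiteOp p N (weylU p) i * (pSiteOp p N (weylU p) (i + 1))ᴴ
          + (pSiteOp p N (weylU p) i)ᴴ * pSiteOp p N (weylU p) (i + 1)) * (UD p N)ᴴ
        = pSiteOp p N (weylV p) (N + 1 - i) + (pSiteOp p N (weylV p) (N + 1 - i))ᴴ := by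
    intro i hi1 hi2
    have e2 : (pSiteOp p N (weylU p) i)ᴴ * pSiteOp p N (weylU p) (i + 1)
        = (pSiteOp p N (weylU p) i * (pSiteOp p N (weylU p) (i + 1))ᴴ)ᴴ := by
      rw [HmulComm (weylU p) (weylU p) (by omega : 1 ≤ i) (by omega)
        (by omega : 1 ≤ i + 1) (by omega) (by omega)]
      rw [conjTranspose_mul, conjTranspose_conjTranspose]
    rw [conj_add, rel3 hp2 hN i hi1 hi2, e2, conj_H, rel3 hp2 hN i hi1 hi2,
      conjTranspose_conjTranspose]
    exact add_comm _ _
  -- sums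
  have hsplit : Finset.Icc 1 N = insert 1 (Finset.Icc 2 N) := by
    ext j
    simp only [Finset.mem_Icc, Finset.mem_insert]
    omega
  have h1notin : (1 : ℕ) ∉ Finset.Icc 2 N := by
    simp only [Finset.mem_Icc]
    omega
  have hS1 : UD p N * (∑ i ∈ Finset.Icc 1 N,
        (pSiteOp p N (weylV p) i + (pSiteOp p N (weylV p) i)ᴴ)) * (UD p N)ᴴ
      = (pSiteOp p N (weylU p) N + (pSiteOp p N (weylU p) N)ᴴ)
        + ∑ i ∈ Finset.Icc 1 (N - 1),
          (pSiteOp p N (weylU p) i * (pSiteOp p N (weylU p) (i + 1))ᴴ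
            + (pSiteOp p N (weylU p) i)ᴴ * pSiteOp p N (weylU p) (i + 1)) := by
    rw [conj_sum, hsplit, Finset.sum_insert h1notin, hCV1]
    congr 1
    apply Finset.sum_nbij' (fun i => N + 1 - i) (fun j => N + 1 - j)
    · intro a ha
      simp only [Finset.mem_Icc] at *
      omega
    · intro a ha
      simp only [Finset.mem_Icc] at *
      omega
    · intro a ha
      simp only [Finset.mem_Icc] at ha
      omega
    · intro a ha
      simp only [Finset.mem_Icc] at ha
      omega
    · intro a ha
      simp only [Finset.mem_Icc] at ha
      exact hCV a ha.1 ha.2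
  have hS2 : UD p N * (∑ i ∈ Finset.Icc 1 (N - 1),
        (pSiteOp p N (weylU p) i * (pSiteOp p N (weylU p) (i + 1))ᴴ
          + (pSiteOp p N (weylU p) i)ᴴ * pSiteOp p N (weylU p) (i + 1))) * (UD p N)ᴴ
      = ∑ i ∈ Finset.Icc 2 N, (pSiteOp p N (weylV p) i + (pSiteOp p N (weylV p) i)ᴴ) := by
    rw [conj_sum]
    apply Finset.sum_nbij' (fun i => N + 1 - i) (fun j => N + 1 - j)
    · intro a ha
      simp only [Finset.mem_Icc] at *
      omega
    · intro a ha
      simp only [Finset.mem_Icc] at *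
      omega
    · intro a ha
      simp only [Finset.mem_Icc] at ha
      omega
    · intro a ha
      simp only [Finset.mem_Icc] at ha
      omega
    · intro a ha
      simp only [Finset.mem_Icc] at ha
      exact hCbond a ha.1 ha.2
  -- assemble
  rw [vpSD, vpSD, conj_sub, conj_sub, conj_neg, conj_smul, conj_smul, conj_smul,
    hS1, hS2, hCB]
  have hd : ((1 / lam : ℝ) : ℂ) = c⁻¹ := by
    rw [hc]
    push_cast
    rw [one_div]
  rw [hd]
  rw [hsplit, Finset.sum_insert h1notin]
  rw [smul_sub, smul_sub, smul_neg, smul_smul, smul_smul, smul_smul]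
  have hhalf : c * ((1 : ℂ) / 2) = c / 2 := by ring
  have hinv : c * (c⁻¹ / 2) = 1 / 2 := by
    field_simp
  rw [hhalf, hinv]
  simp only [smul_add]
  abel

end Ham

end VPD

/-- **Exact self-duality of the finite vector Potts (p-clock) chain** under `λ ↔ 1/λ`,
implemented by a unitary mapping the bonds as in the bond-algebra isomorphism `Φ_d`
(with `r(i) = N + 1 − i`). -/


theorem vector_potts_exact_selfduality (p N : ℕ) (hp : 2 ≤ p) (hN : 2 ≤ N) :
    ∃ U : Matrix (Fin N → Fin p) (Fin N → Fin p) ℂ,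
      U ∈ Matrix.unitaryGroup (Fin N → Fin p) ℂ ∧
      U * pSiteOp p N (weylU p) N * Uᴴ = (pSiteOp p N (weylV p) 1)ᴴ ∧
      U * (pSiteOp p N (weylV p) 1)ᴴ * Uᴴ = (pSiteOp p N (weylU p) N)ᴴ ∧
      (∀ i : ℕ, 1 ≤ i → i ≤ N - 1 →
        U * (pSiteOp p N (weylU p) i * (pSiteOp p N (weylU p) (i + 1))ᴴ) * Uᴴ
          = (pSiteOp p N (weylV p) (N + 1 - i))ᴴ) ∧
      (∀ i : ℕ, 2 ≤ i → i ≤ N →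
        U * (pSiteOp p N (weylV p) i)ᴴ * Uᴴ
          = (pSiteOp p N (weylU p) (N + 1 - i))ᴴ * pSiteOp p N (weylU p) (N + 1 - i + 1)) ∧
      (∀ lam : ℝ, lam ≠ 0 →
        U * vpSD p N lam * Uᴴ = (lam : ℂ) • vpSD p N (1 / lam)) := by
  haveI : NeZero p := ⟨by omega⟩
  refine ⟨VPD.UD p N, ?_, VPD.rel1 hp hN, VPD.rel2 hp hN,
    fun i hi1 hi2 => VPD.rel3 hp hN i hi1 hi2,
    fun i hi1 hi2 => VPD.rel4 hp hN i hi1 hi2,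
    fun lam hlam => VPD.relH hp hN lam hlam⟩
  rw [Matrix.mem_unitaryGroup_iff, Matrix.star_eq_conjTranspose]
  exact VPD.UD_mul_UDH hp
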